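/- First-order bound via inverse inequality: let ω_h be a piecewise polynomial (finite element) function on a shape-regular mesh of size h satisfying the inverse inequality ‖∇·ω_h‖_{L²} ≤ C h^{−1} ‖ω_h‖_{L²}, let ℓ ∈ W^{1,∞} with ‖ℓ − Π₀ℓ‖_{L^∞} ≤ C h, and let r ∈ H¹ with ‖(I − Π_R) r‖_{L²} ≤ C h where Π_R is an L²-projection. Then |(ℓ ∇·ω_h, (I − Π_R) r)_{L²}| ≤ C h ‖ω_h‖_{L²} ‖r‖_{H¹}, provided (∇·ω_h, (I−Π_R)r) = 0 for piecewise constant multipliers (i.e., (Π₀ℓ ∇·ω_h, (I−Π_R)r)_{L²} = 0). -/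

import Mathlib

/-!
Since `∫ ℓ₀ ∇·ω (I - Π_R) r = 0`, only the oscillation `ℓ - ℓ₀ = O(h)` of the weight contributes.
Bounding it pointwise and applying Cauchy–Schwarz gives `C h · ‖∇·ω‖ ‖(I - Π_R) r‖`, and the
inverse inequality `‖∇·ω‖ ≤ C h⁻¹ ‖ω‖` exactly cancels the factor `h` of the approximation bound
`‖(I - Π_R) r‖ ≤ C h ‖r‖`, leaving one power of `h`.
-/

open MeasureTheory

section

variable {α : Type*} [MeasurableSpace α] {μ : Measure α}

theorem integral_norm_mul_norm_le_sqrt_mul_sqrt {f g : α → ℝ} (hf : MemLp f 2 μ)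
    (hg : MemLp g 2 μ) :
    ∫ x, ‖f x‖ * ‖g x‖ ∂μ ≤ √(∫ x, f x ^ 2 ∂μ) * √(∫ x, g x ^ 2 ∂μ) := by
  have norm_rpow_two (u : α → ℝ) : (fun x => ‖u x‖ ^ (2 : ℝ)) = fun x => u x ^ 2 := by
    ext x
    rw [Real.rpow_two, Real.norm_eq_abs, sq_abs]
  have holder := integral_mul_norm_le_Lp_mul_Lq (μ := μ) (f := f) (g := g)
    Real.HolderConjugate.two_two (by rwa [ENNReal.ofReal_ofNat]) (by rwa [ENNReal.ofReal_ofNat])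
  rwa [norm_rpow_two, norm_rpow_two, ← Real.sqrt_eq_rpow, ← Real.sqrt_eq_rpow] at holder

theorem integral_norm_mul_norm_le_of_integral_sq_le {f g : α → ℝ} {a b : ℝ} (hf : MemLp f 2 μ)
    (hg : MemLp g 2 μ) (ha : ∫ x, f x ^ 2 ∂μ ≤ a ^ 2) (hb : ∫ x, g x ^ 2 ∂μ ≤ b ^ 2) :
    ∫ x, ‖f x‖ * ‖g x‖ ∂μ ≤ |a| * |b| := by
  refine (integral_norm_mul_norm_le_sqrt_mul_sqrt hf hg).trans ?_
  rw [← Real.sqrt_sq_eq_abs, ← Real.sqrt_sq_eq_abs]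
  gcongr

theorem abs_integral_mul_le_of_abs_le {φ u : α → ℝ} {K : ℝ} (hu : Integrable u μ)
    (hφ : ∀ᵐ x ∂μ, |φ x| ≤ K) :
    |∫ x, φ x * u x ∂μ| ≤ K * ∫ x, |u x| ∂μ := by
  rw [← integral_const_mul, ← Real.norm_eq_abs]
  refine norm_integral_le_of_norm_le (hu.abs.const_mul K) ?_
  filter_upwards [hφ] with x hx
  rw [Real.norm_eq_abs, abs_mul]
  exact mul_le_mul_of_nonneg_right hx (abs_nonneg _)

/-- If `ℓ * u` is not integrable its integral is `0`, so the inequality also holds then. -/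
theorem abs_integral_mul_le_of_integral_mul_eq_zero {ℓ ℓ₀ u : α → ℝ}
    (hdiff : Integrable (fun x => (ℓ x - ℓ₀ x) * u x) μ) (horth : ∫ x, ℓ₀ x * u x ∂μ = 0) :
    |∫ x, ℓ x * u x ∂μ| ≤ |∫ x, (ℓ x - ℓ₀ x) * u x ∂μ| := by
  by_cases hint : Integrable (fun x => ℓ x * u x) μ
  · have hℓ₀ : Integrable (fun x => ℓ₀ x * u x) μ :=
      (hint.sub hdiff).congr (.of_forall fun x => by simp only [Pi.sub_apply]; ring)
    have hsplit : ∫ x, ℓ x * u x ∂μ = ∫ x, (ℓ x - ℓ₀ x) * u x ∂μ + ∫ x, ℓ₀ x * u x ∂μ := by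
      rw [← integral_add hdiff hℓ₀]
      congr 1 with x
      ring
    rw [hsplit, horth, add_zero]
  · rw [integral_undef hint, abs_zero]
    exact abs_nonneg _

end

/-- First-order bound via inverse inequality: if ‖∇·ω_h‖ ≤ C h⁻¹ ‖ω_h‖,
‖ℓ − Π₀ℓ‖_∞ ≤ C h, ‖(I − Π_R)r‖ ≤ C h ‖r‖_{H¹}, and the piecewise-constant part
of ℓ is orthogonal, then |(ℓ ∇·ω_h, (I − Π_R)r)| ≤ C³ h ‖ω_h‖ ‖r‖_{H¹}. -/
theorem first_order_bound_inverse_inequality {α : Type*} [MeasurableSpace α]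
    (μ : Measure α) (C h ωnorm rnorm : ℝ)
    (hC : 0 < C) (hh : 0 < h) (hω : 0 ≤ ωnorm) (hr : 0 ≤ rnorm)
    (ℓ ℓ0 dω e : α → ℝ)
    (hℓm : AEStronglyMeasurable ℓ μ) (hℓ0m : AEStronglyMeasurable ℓ0 μ)
    (hdω : MemLp dω 2 μ) (he : MemLp e 2 μ)
    (hℓ : ∀ᵐ x ∂μ, |ℓ x - ℓ0 x| ≤ C * h)
    (hinv : ∫ x, (dω x) ^ 2 ∂μ ≤ (C * h⁻¹ * ωnorm) ^ 2)
    (happrox : ∫ x, (e x) ^ 2 ∂μ ≤ (C * h * rnorm) ^ 2)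
    (horth : ∫ x, ℓ0 x * dω x * e x ∂μ = 0) :
    |∫ x, ℓ x * dω x * e x ∂μ| ≤ C ^ 3 * h * ωnorm * rnorm := by
  have hprod : Integrable (fun x => dω x * e x) μ := hdω.integrable_mul he
  have hdiff : Integrable (fun x => (ℓ x - ℓ0 x) * (dω x * e x)) μ :=
    hprod.bdd_mul (hℓm.sub hℓ0m) hℓ
  simp_rw [mul_assoc] at horth
  calc |∫ x, ℓ x * dω x * e x ∂μ|
      = |∫ x, ℓ x * (dω x * e x) ∂μ| := by simp_rw [mul_assoc]
    _ ≤ |∫ x, (ℓ x - ℓ0 x) * (dω x * e x) ∂μ| :=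
        abs_integral_mul_le_of_integral_mul_eq_zero hdiff horth
    _ ≤ C * h * ∫ x, |dω x * e x| ∂μ := abs_integral_mul_le_of_abs_le hprod hℓ
    _ = C * h * ∫ x, ‖dω x‖ * ‖e x‖ ∂μ := by simp only [abs_mul, Real.norm_eq_abs]
    _ ≤ C * h * (|C * h⁻¹ * ωnorm| * |C * h * rnorm|) := by
        gcongr
        exact integral_norm_mul_norm_le_of_integral_sq_le hdω he hinv happrox
    _ = C ^ 3 * h * ωnorm * rnorm := by
        rw [abs_of_nonneg (by positivity), abs_of_nonneg (by positivity)]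
        field_simp
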